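/- arXiv:2503.20762 — 3 statements merged into one kernel-verified Lean document; each statement's English description precedes it below -/
import Mathlib

section
/- Consider the deterministic Muon iteration without momentum: given a differentiable f : R^{m×n} → R that is 1-smooth with respect to ‖X‖_L = sqrt(tr(Xᵀ L X)) for a symmetric positive definite L ∈ R^{m×m} and bounded below by f^*, the update is W_{t+1} = W_t - η U_t V_tᵀ, where U_t S_t V_tᵀ is a compact singular value decomposition of ∇f(W_t) (U_t, V_t having orthonormal columns spanning the column and row spaces and S_t diagonal with the positive singular values). With constant step size η = sqrt( 2 (f(W_0) - f^*) / (‖L‖_* T) ), it holds that (1/T) Σ_{t=0}^{T-1} ‖∇f(W_t)‖_* ≤ sqrt( 2 ‖L‖_* (f(W_0) - f^*) / T ). -/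
/-!
Write the gradient at `W t` as `G = U S Vᵀ`. Smoothness along the polar direction `U Vᵀ` gives
`f (W - s U Vᵀ) ≤ f W - s ‖G‖_* + s² / 2 ‖L‖_*`, because `⟨G, U Vᵀ⟩ = tr S = ‖G‖_*` and
`‖U Vᵀ‖_L² = tr (Uᵀ L U) ≤ tr L = ‖L‖_*` (`U Uᵀ` is an orthogonal projection).
Telescoping over `T` steps and using `f ≥ f^*` gives `η ∑ ‖G_t‖_* ≤ Δ + T η² ‖L‖_* / 2`
with `Δ = f (W 0) - f^*`; the chosen `η` makes the two terms equal.
-/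

open Matrix
open scoped Classical

/-- The positive semidefinite square root of a positive semidefinite real matrix
(junk value `0` if the matrix is not positive semidefinite). -/
noncomputable def psdSqrt {k : ℕ} (X : Matrix (Fin k) (Fin k) ℝ) : Matrix (Fin k) (Fin k) ℝ :=
  if h : X.PosSemidef then
    h.1.eigenvectorUnitary.1 * diagonal ((↑) ∘ (√·) ∘ h.1.eigenvalues) *
      (star h.1.eigenvectorUnitary : Matrix (Fin k) (Fin k) ℝ)
  else 0

/-- The trace (nuclear) norm of a real matrix: the sum of its singular values,
i.e. `tr((Aᵀ A)^{1/2})`. -/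
noncomputable def nuclearNorm {m n : ℕ} (A : Matrix (Fin m) (Fin n) ℝ) : ℝ :=
  (psdSqrt (Aᵀ * A)).trace

section Orthonormal

variable {m n r : Type*} [Fintype m] [Fintype n] [Fintype r] [DecidableEq r]
  {U : Matrix m r ℝ} {V : Matrix n r ℝ}

theorem transpose_mul_mul_cancel_left (hU : Uᵀ * U = 1) {p : Type*} (X : Matrix r p ℝ) :
    Uᵀ * (U * X) = X := by
  rw [← Matrix.mul_assoc, hU, Matrix.one_mul]

theorem trace_transpose_mul_mul_le_trace [DecidableEq m] {L : Matrix m m ℝ} (hL : L.PosSemidef)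
    (hU : Uᵀ * U = 1) : (Uᵀ * L * U).trace ≤ L.trace := by
  set Q := 1 - U * Uᵀ
  have hQt : Qᵀ = Q := by simp [Q, Matrix.transpose_sub]
  have hQQ : Q * Q = Q := by
    simp only [Q, Matrix.sub_mul, Matrix.mul_sub, Matrix.one_mul, Matrix.mul_one, Matrix.mul_assoc,
      transpose_mul_mul_cancel_left hU]
    abel
  -- `Q` is the orthogonal projection onto the complement of the column space of `U`.
  have hgap : L.trace - (Uᵀ * L * U).trace = (Qᵀ * L * Q).trace := by
    calc L.trace - (Uᵀ * L * U).trace = L.trace - (L * (U * Uᵀ)).trace := by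
          rw [Matrix.trace_mul_cycle, Matrix.trace_mul_comm]
      _ = (L * (Q * Qᵀ)).trace := by
          rw [hQt, hQQ, Matrix.mul_sub, Matrix.trace_sub, Matrix.mul_one]
      _ = (Qᵀ * L * Q).trace := by
          rw [Matrix.trace_mul_cycle Qᵀ L Q, Matrix.trace_mul_comm]
  have hnonneg : 0 ≤ (Qᵀ * L * Q).trace := by
    simpa [conjTranspose_eq_transpose_of_trivial] using
      (hL.conjTranspose_mul_mul_same Q).trace_nonneg
  linarith

theorem trace_quadratic_form_mul_transpose (hV : Vᵀ * V = 1) (L : Matrix m m ℝ) :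
    ((U * Vᵀ)ᵀ * L * (U * Vᵀ)).trace = (Uᵀ * L * U).trace := by
  rw [Matrix.transpose_mul, Matrix.transpose_transpose, Matrix.mul_assoc, Matrix.mul_assoc,
    Matrix.trace_mul_comm]
  simp only [Matrix.mul_assoc, hV, Matrix.mul_one]

theorem trace_svd_transpose_mul_polar (hU : Uᵀ * U = 1) (hV : Vᵀ * V = 1) (d : r → ℝ) :
    ((U * diagonal d * Vᵀ)ᵀ * (U * Vᵀ)).trace = ∑ i, d i := by
  simp only [Matrix.transpose_mul, Matrix.transpose_transpose, diagonal_transpose,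
    Matrix.mul_assoc, transpose_mul_mul_cancel_left hU]
  rw [Matrix.trace_mul_comm, Matrix.mul_assoc, hV, Matrix.mul_one, trace_diagonal]

end Orthonormal

open scoped MatrixOrder in
theorem psdSqrt_eq_of_mul_self {k : ℕ} {X B : Matrix (Fin k) (Fin k) ℝ} (hB : B.PosSemidef)
    (h : B * B = X) : psdSqrt X = B := by
  have hX : X.PosSemidef := by
    simpa only [hB.isHermitian.eq, h] using posSemidef_conjTranspose_mul_self B
  rw [psdSqrt, dif_pos hX, ← CFC.sqrt_unique h hB.nonneg,
    CFC.sqrt_eq_real_sqrt X hX.nonneg, cfcₙ_eq_cfc, hX.1.cfc_eq]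
  simp [IsHermitian.cfc, Function.comp_def]

theorem nuclearNorm_of_posSemidef {k : ℕ} {L : Matrix (Fin k) (Fin k) ℝ} (hL : L.PosSemidef) :
    nuclearNorm L = L.trace := by
  have hLt : Lᵀ = L := by simpa [conjTranspose_eq_transpose_of_trivial] using hL.isHermitian.eq
  rw [nuclearNorm, psdSqrt_eq_of_mul_self hL (by rw [hLt])]

theorem nuclearNorm_svd {m n r : ℕ} {U : Matrix (Fin m) (Fin r) ℝ} {V : Matrix (Fin n) (Fin r) ℝ}
    (hU : Uᵀ * U = 1) (hV : Vᵀ * V = 1) {d : Fin r → ℝ} (hd : ∀ i, 0 ≤ d i) :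
    nuclearNorm (U * diagonal d * Vᵀ) = ∑ i, d i := by
  have hB : (V * diagonal d * Vᵀ).PosSemidef := by
    simpa [conjTranspose_eq_transpose_of_trivial] using
      (PosSemidef.diagonal (fun i => hd i)).mul_mul_conjTranspose_same V
  have hsq : (V * diagonal d * Vᵀ) * (V * diagonal d * Vᵀ) =
      (U * diagonal d * Vᵀ)ᵀ * (U * diagonal d * Vᵀ) := by
    simp only [Matrix.transpose_mul, Matrix.transpose_transpose, diagonal_transpose,
      Matrix.mul_assoc, transpose_mul_mul_cancel_left hU, transpose_mul_mul_cancel_left hV]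
  rw [nuclearNorm, psdSqrt_eq_of_mul_self hB hsq, Matrix.trace_mul_comm, ← Matrix.mul_assoc, hV,
    Matrix.one_mul, trace_diagonal]

theorem apply_sub_smul_mul_transpose_le {m n r : ℕ} {f : Matrix (Fin m) (Fin n) ℝ → ℝ}
    {G X : Matrix (Fin m) (Fin n) ℝ} {L : Matrix (Fin m) (Fin m) ℝ} (hL : L.PosSemidef)
    (hsmooth : ∀ Y, f Y ≤ f X + (Gᵀ * (Y - X)).trace + (1 / 2) * ((Y - X)ᵀ * L * (Y - X)).trace)
    {U : Matrix (Fin m) (Fin r) ℝ} {V : Matrix (Fin n) (Fin r) ℝ} (hU : Uᵀ * U = 1)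
    (hV : Vᵀ * V = 1) {d : Fin r → ℝ} (hd : ∀ i, 0 ≤ d i) (hG : G = U * diagonal d * Vᵀ)
    (s : ℝ) :
    f (X - s • (U * Vᵀ)) ≤ f X - s * nuclearNorm G + s ^ 2 / 2 * nuclearNorm L := by
  have hlin : (Gᵀ * (X - s • (U * Vᵀ) - X)).trace = -(s * nuclearNorm G) := by
    rw [sub_sub_cancel_left, Matrix.mul_neg, Matrix.mul_smul, trace_neg, trace_smul, hG,
      trace_svd_transpose_mul_polar hU hV, nuclearNorm_svd hU hV hd, smul_eq_mul]
  have hquad : ((X - s • (U * Vᵀ) - X)ᵀ * L * (X - s • (U * Vᵀ) - X)).trace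
      ≤ s ^ 2 * nuclearNorm L := by
    rw [sub_sub_cancel_left, transpose_neg, transpose_smul, Matrix.neg_mul, Matrix.neg_mul,
      Matrix.mul_neg, neg_neg, Matrix.smul_mul, Matrix.smul_mul, Matrix.mul_smul, smul_smul,
      trace_smul, smul_eq_mul, ← pow_two, trace_quadratic_form_mul_transpose hV,
      nuclearNorm_of_posSemidef hL]
    exact mul_le_mul_of_nonneg_left (trace_transpose_mul_mul_le_trace hL hU) (sq_nonneg s)
  linarith [hsmooth (X - s • (U * Vᵀ))]

theorem mul_sum_range_le_of_descent {φ a : ℕ → ℝ} {η c : ℝ}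
    (h : ∀ t, φ (t + 1) ≤ φ t - η * a t + c) (T : ℕ) :
    η * ∑ t ∈ Finset.range T, a t ≤ φ 0 - φ T + T * c := by
  induction T with
  | zero => simp
  | succ T ih =>
    rw [Finset.sum_range_succ, mul_add]
    push_cast
    linarith [h T]

theorem nonpos_of_forall_mul_le_add_sq {a b c : ℝ} (hb : 0 ≤ b) (hc : 0 ≤ c)
    (hbc : b = 0 ∨ c = 0) (h : ∀ s > 0, s * a ≤ b + s ^ 2 * c) : a ≤ 0 := by
  by_contra! ha
  rcases hbc with rfl | rfl
  · have := h (a / (c + 1)) (by positivity)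
    field_simp at this
    nlinarith
  · have := h ((b + 1) / a) (by positivity)
    rw [mul_zero, add_zero, div_mul_cancel₀ _ ha.ne'] at this
    linarith

theorem one_div_mul_le_sqrt_of_mul_le {S Δ K T η : ℝ} (hK : 0 ≤ K) (hT : 0 < T)
    (hη : η = √(2 * Δ / (K * T))) (hηpos : 0 < η) (h : η * S ≤ Δ + T * (η ^ 2 / 2 * K)) :
    1 / T * S ≤ √(2 * K * Δ / T) := by
  have harg : 0 < 2 * Δ / (K * T) := Real.sqrt_pos.mp (hη ▸ hηpos)
  have hKpos : 0 < K := hK.lt_of_ne (by rintro rfl; simp at harg)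
  have hηsq : η ^ 2 = 2 * Δ / (K * T) := by rw [hη, Real.sq_sqrt harg.le]
  have hsqrt : √(2 * K * Δ / T) = η * K := by
    rw [← Real.sqrt_sq (by positivity : 0 ≤ η * K), mul_pow, hηsq]
    congr 1
    field_simp
  have hΔ : Δ = T * (η ^ 2 / 2 * K) := by
    rw [hηsq]
    field_simp
  rw [hsqrt, one_div_mul_eq_div, div_le_iff₀ hT]
  refine le_of_mul_le_mul_left ?_ hηpos
  linear_combination h + hΔ

/-- deterministic Muon iteration without momentum. Let `f : ℝ^{m×n} → ℝ`
be differentiable with gradient `gradf`, `1`-smooth with respect to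
`‖X‖_L = sqrt(tr(Xᵀ L X))` for a symmetric positive definite `L ∈ ℝ^{m×m}`
(i.e. `f(Y) ≤ f(X) + ⟨∇f(X), Y - X⟩ + (1/2)‖Y - X‖_L²`), and bounded below by `f^*`.
The update is `W_{t+1} = W_t - η U_t V_tᵀ` where `U_t S_t V_tᵀ` is a compact SVD of
`∇f(W_t)` (`U_t`, `V_t` with orthonormal columns, `S_t` diagonal with the positive
singular values), with constant step size `η = sqrt(2 (f(W_0) - f^*) / (‖L‖_* T))`.
Then `(1/T) ∑_{t<T} ‖∇f(W_t)‖_* ≤ sqrt(2 ‖L‖_* (f(W_0) - f^*) / T)`. -/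
theorem stmt3 (m n T : ℕ) (hT : 0 < T)
    (f : Matrix (Fin m) (Fin n) ℝ → ℝ)
    (gradf : Matrix (Fin m) (Fin n) ℝ → Matrix (Fin m) (Fin n) ℝ)
    (L : Matrix (Fin m) (Fin m) ℝ) (hL : L.PosDef)
    (hsmooth : ∀ X Y : Matrix (Fin m) (Fin n) ℝ,
      f Y ≤ f X + ((gradf X)ᵀ * (Y - X)).trace + (1 / 2) * ((Y - X)ᵀ * L * (Y - X)).trace)
    (fstar : ℝ) (hlb : ∀ Wmat, fstar ≤ f Wmat)
    (W : ℕ → Matrix (Fin m) (Fin n) ℝ)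
    (η : ℝ) (hη : η = Real.sqrt (2 * (f (W 0) - fstar) / (nuclearNorm L * T)))
    (hupd : ∀ t, ∃ (r : ℕ) (U : Matrix (Fin m) (Fin r) ℝ) (S : Matrix (Fin r) (Fin r) ℝ)
        (V : Matrix (Fin n) (Fin r) ℝ),
      Uᵀ * U = 1 ∧ Vᵀ * V = 1 ∧
      (∃ d : Fin r → ℝ, (∀ i, 0 < d i) ∧ S = Matrix.diagonal d) ∧
      gradf (W t) = U * S * Vᵀ ∧
      W (t + 1) = W t - η • (U * Vᵀ)) :
    (1 / (T : ℝ)) * ∑ t ∈ Finset.range T, nuclearNorm (gradf (W t)) ≤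
      Real.sqrt (2 * nuclearNorm L * (f (W 0) - fstar) / T) := by
  choose r U S V hU hV hS hG hW using hupd
  have hK : 0 ≤ nuclearNorm L :=
    nuclearNorm_of_posSemidef hL.posSemidef ▸ hL.posSemidef.trace_nonneg
  have hΔ : 0 ≤ f (W 0) - fstar := sub_nonneg.mpr (hlb (W 0))
  have hdescent (t : ℕ) (s : ℝ) : f (W t - s • (U t * (V t)ᵀ)) ≤
      f (W t) - s * nuclearNorm (gradf (W t)) + s ^ 2 / 2 * nuclearNorm L := by
    obtain ⟨d, hd, hSd⟩ := hS t
    exact apply_sub_smul_mul_transpose_le hL.posSemidef (hsmooth (W t)) (hU t) (hV t)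
      (fun i => (hd i).le) (by rw [hG t, hSd]) s
  obtain hη0 | hηpos := (hη ▸ Real.sqrt_nonneg _ : 0 ≤ η).eq_or_lt
  · -- With `η = 0` the iterates stay at `W 0`, where the descent inequality holds for every
    -- step `s > 0` while `f (W 0) - fstar` or `‖L‖_*` vanishes.
    have hconst (t : ℕ) : W t = W 0 := by
      induction t with
      | zero => rfl
      | succ t ih => rw [hW t, ← hη0, zero_smul, sub_zero, ih]
    have hdegenerate : f (W 0) - fstar = 0 ∨ nuclearNorm L / 2 = 0 := by
      by_contra! h
      have := hΔ.lt_of_ne' h.1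
      have := hK.lt_of_ne' (by simpa using h.2)
      have : 0 < 2 * (f (W 0) - fstar) / (nuclearNorm L * T) := by positivity
      linarith [Real.sqrt_eq_zero'.mp (hη ▸ hη0.symm)]
    have hgrad (t : ℕ) : nuclearNorm (gradf (W t)) ≤ 0 := by
      refine nonpos_of_forall_mul_le_add_sq hΔ (by positivity) hdegenerate fun s _ => ?_
      have := hdescent t s
      rw [hconst t] at this ⊢
      linarith [hlb (W 0 - s • (U t * (V t)ᵀ))]
    calc _ ≤ (1 / (T : ℝ)) * 0 := by gcongr; exact Finset.sum_nonpos fun t _ => hgrad t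
      _ ≤ _ := by rw [mul_zero]; exact Real.sqrt_nonneg _
  · have htelescope := mul_sum_range_le_of_descent (φ := fun t => f (W t))
      (fun t => hW t ▸ hdescent t η) T
    exact one_div_mul_le_sqrt_of_mul_le (S := ∑ t ∈ Finset.range T, nuclearNorm (gradf (W t)))
      hK (by positivity) hη hηpos (by linarith [hlb (W T)])
end

section
/- For symmetric positive definite matrices X, Y ∈ R^{m×m}, it holds that tr((X + Y)^{1/2}) ≤ tr(X^{1/2}) + tr(Y^{1/2}). -/
/-!
Let `S = (X + Y)^{1/2}`. Then `tr S = tr (S⁻¹ X) + tr (S⁻¹ Y)`, so it suffices to show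
`tr (S⁻¹ R²) ≤ tr R` whenever `R ⪰ 0` and `R² ⪯ S²`. With `K = R S⁻¹` we have
`tr (S⁻¹ R²) = tr (R K)` and `1 - Kᵀ K = S⁻¹ (S² - R²) S⁻¹ ⪰ 0`, so `K` is a contraction.
Finally, writing `R = Bᵀ B`, `tr (R K) = ∑ᵢ bᵢ ⬝ K bᵢ ≤ ∑ᵢ bᵢ ⬝ bᵢ = tr R` over the rows `bᵢ` of `B`.
-/

open Matrix
open scoped Classical

namespace Matrix

variable {n : Type*} [Fintype n]

theorem dotProduct_mulVec_le_dotProduct_self [DecidableEq n] {K : Matrix n n ℝ}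
    (hK : (1 - Kᵀ * K).PosSemidef) (v : n → ℝ) :
    v ⬝ᵥ (K *ᵥ v) ≤ v ⬝ᵥ v := by
  have hnorm : (K *ᵥ v) ⬝ᵥ (K *ᵥ v) ≤ v ⬝ᵥ v := by
    have := hK.dotProduct_mulVec_nonneg v
    simp only [star_trivial, sub_mulVec, one_mulVec, dotProduct_sub, ← mulVec_mulVec,
      dotProduct_mulVec, vecMul_transpose] at this
    rw [← dotProduct_mulVec] at this
    linarith
  have hsq : 0 ≤ (v - K *ᵥ v) ⬝ᵥ (v - K *ᵥ v) := by
    simpa using dotProduct_star_self_nonneg (v - K *ᵥ v)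
  rw [dotProduct_sub, sub_dotProduct, sub_dotProduct, dotProduct_comm (K *ᵥ v) v] at hsq
  linarith

theorem PosSemidef.trace_mul_le_trace [DecidableEq n] {R K : Matrix n n ℝ}
    (hR : R.PosSemidef) (hK : (1 - Kᵀ * K).PosSemidef) :
    (R * K).trace ≤ R.trace := by
  open scoped MatrixOrder in
  obtain ⟨B, rfl⟩ := CStarAlgebra.nonneg_iff_eq_star_mul_self.mp hR.nonneg
  rw [star_eq_conjTranspose, conjTranspose_eq_transpose_of_trivial, Matrix.mul_assoc,
    trace_mul_comm, trace_mul_comm Bᵀ]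
  refine Finset.sum_le_sum fun i _ => ?_
  rw [diag_apply, mul_mul_apply, transpose_transpose]
  exact dotProduct_mulVec_le_dotProduct_self hK (B i)

theorem trace_inv_mul_mul_self_le [DecidableEq n] {S R : Matrix n n ℝ} (hS : S.IsHermitian)
    (hSdet : IsUnit S.det) (hR : R.PosSemidef) (hRS : (S * S - R * R).PosSemidef) :
    (S⁻¹ * (R * R)).trace ≤ R.trace := by
  set K := R * S⁻¹
  have hcontraction : (1 - Kᵀ * K).PosSemidef := by
    have hK_transpose : Kᵀ = S⁻¹ * R := by
      rw [transpose_mul, ← conjTranspose_eq_transpose_of_trivial,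
        ← conjTranspose_eq_transpose_of_trivial, hS.inv.eq, hR.isHermitian.eq]
    have h : 1 - Kᵀ * K = S⁻¹ * (S * S - R * R) * S⁻¹ := by
      rw [hK_transpose, Matrix.mul_sub, Matrix.sub_mul, ← Matrix.mul_assoc, ← Matrix.mul_assoc,
        nonsing_inv_mul _ hSdet, Matrix.one_mul, mul_nonsing_inv _ hSdet]
      simp only [Matrix.mul_assoc]
    rw [h]
    simpa only [hS.inv.eq] using hRS.mul_mul_conjTranspose_same S⁻¹
  calc (S⁻¹ * (R * R)).trace = (R * K).trace := by
        rw [trace_mul_comm, Matrix.mul_assoc]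
    _ ≤ R.trace := hR.trace_mul_le_trace hcontraction

theorem trace_le_trace_add_trace_of_mul_self_eq_add [DecidableEq n] {S R₁ R₂ : Matrix n n ℝ}
    (hS : S.IsHermitian) (hSdet : IsUnit S.det) (hR₁ : R₁.PosSemidef) (hR₂ : R₂.PosSemidef)
    (h : S * S = R₁ * R₁ + R₂ * R₂) :
    S.trace ≤ R₁.trace + R₂.trace := by
  have hR₁S : (S * S - R₁ * R₁).PosSemidef := by
    simpa only [h, add_sub_cancel_left, sq] using hR₂.pow 2
  have hR₂S : (S * S - R₂ * R₂).PosSemidef := by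
    simpa only [h, add_sub_cancel_right, sq] using hR₁.pow 2
  calc S.trace = (S⁻¹ * (S * S)).trace := by
        rw [← Matrix.mul_assoc, nonsing_inv_mul _ hSdet, Matrix.one_mul]
    _ = (S⁻¹ * (R₁ * R₁)).trace + (S⁻¹ * (R₂ * R₂)).trace := by
        rw [h, Matrix.mul_add, trace_add]
    _ ≤ R₁.trace + R₂.trace :=
        add_le_add (trace_inv_mul_mul_self_le hS hSdet hR₁ hR₁S)
          (trace_inv_mul_mul_self_le hS hSdet hR₂ hR₂S)

end Matrix

section psdSqrt

variable {k : ℕ} {X : Matrix (Fin k) (Fin k) ℝ}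

theorem posSemidef_psdSqrt (hX : X.PosSemidef) : (psdSqrt X).PosSemidef := by
  rw [psdSqrt, dif_pos hX]
  exact (PosSemidef.diagonal fun i => Real.sqrt_nonneg _).mul_mul_conjTranspose_same _

theorem psdSqrt_mul_self (hX : X.PosSemidef) : psdSqrt X * psdSqrt X = X := by
  have hU : (star hX.1.eigenvectorUnitary : Matrix (Fin k) (Fin k) ℝ) *
      hX.1.eigenvectorUnitary.1 = 1 := Unitary.coe_star_mul_self _
  have hD : (diagonal ((↑) ∘ (√·) ∘ hX.1.eigenvalues) : Matrix (Fin k) (Fin k) ℝ) *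
      diagonal ((↑) ∘ (√·) ∘ hX.1.eigenvalues) = diagonal (RCLike.ofReal ∘ hX.1.eigenvalues) := by
    rw [diagonal_mul_diagonal]
    congr 1
    funext i
    simp [Real.mul_self_sqrt (hX.eigenvalues_nonneg i)]
  conv_rhs => rw [hX.1.spectral_theorem, Unitary.conjStarAlgAut_apply]
  rw [psdSqrt, dif_pos hX, ← hD]
  simp only [Matrix.mul_assoc]
  rw [← Matrix.mul_assoc (star hX.1.eigenvectorUnitary : Matrix (Fin k) (Fin k) ℝ), hU,
    Matrix.one_mul]

theorem isUnit_det_psdSqrt (hX : X.PosDef) : IsUnit (psdSqrt X).det := by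
  have hdet : (psdSqrt X).det * (psdSqrt X).det = X.det := by
    rw [← det_mul, psdSqrt_mul_self hX.posSemidef]
  exact isUnit_iff_ne_zero.2 fun h => hX.det_pos.ne' (by rw [← hdet, h, zero_mul])

end psdSqrt

/-- for symmetric positive definite matrices `X, Y ∈ ℝ^{m×m}`,
`tr((X + Y)^{1/2}) ≤ tr(X^{1/2}) + tr(Y^{1/2})`. -/
theorem stmt5 (m : ℕ) (X Y : Matrix (Fin m) (Fin m) ℝ) (hX : X.PosDef) (hY : Y.PosDef) :
    (psdSqrt (X + Y)).trace ≤ (psdSqrt X).trace + (psdSqrt Y).trace := by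
  have hXY : (X + Y).PosDef := hX.add hY
  refine trace_le_trace_add_trace_of_mul_self_eq_add
    (posSemidef_psdSqrt hXY.posSemidef).isHermitian (isUnit_det_psdSqrt hXY)
    (posSemidef_psdSqrt hX.posSemidef) (posSemidef_psdSqrt hY.posSemidef) ?_
  rw [psdSqrt_mul_self hXY.posSemidef, psdSqrt_mul_self hX.posSemidef,
    psdSqrt_mul_self hY.posSemidef]
end

section
/- For a symmetric positive definite matrix Λ ∈ R^{m×m} and any matrix G ∈ R^{m×n}, it holds that ‖G‖_* ≤ sqrt( ‖Λ‖_* · tr(Gᵀ Λ^{-1} G) ), where ‖Λ‖_* = tr(Λ). -/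
/-!
With `S = (GᵀG)^{1/2}` and `T` its Moore–Penrose pseudo-inverse, `W = G T` satisfies
`W Wᵀ W = W` and `tr S = tr(Wᵀ G) = tr(Wᵀ Λ (Λ⁻¹ G))`. Cauchy–Schwarz for the semi-inner product
`(X, Y) ↦ tr(Xᵀ Λ Y)` bounds this by `√(tr(Wᵀ Λ W) · tr(Gᵀ Λ⁻¹ G))`, and `tr(Wᵀ Λ W) ≤ tr Λ`
because `W Wᵀ` is an orthogonal projection.
-/

open Matrix
open scoped Classical

open scoped MatrixOrder

lemma psdSqrt_eq_sqrt {k : ℕ} {X : Matrix (Fin k) (Fin k) ℝ} (h : X.PosSemidef) :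
    psdSqrt X = CFC.sqrt X := by
  rw [CFC.sqrt_eq_real_sqrt X h.nonneg, cfcₙ_eq_cfc, h.1.cfc_eq, psdSqrt, dif_pos h,
    IsHermitian.cfc, Unitary.conjStarAlgAut_apply]
  rfl

lemma nuclearNorm_eq_trace_sqrt {m n : ℕ} (A : Matrix (Fin m) (Fin n) ℝ) :
    nuclearNorm A = (CFC.sqrt (Aᵀ * A)).trace := by
  rw [nuclearNorm, psdSqrt_eq_sqrt (by simpa using posSemidef_conjTranspose_mul_self A)]

lemma nuclearNorm_eq_trace {m : ℕ} {A : Matrix (Fin m) (Fin m) ℝ} (hA : A.PosSemidef) :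
    nuclearNorm A = A.trace := by
  rw [nuclearNorm_eq_trace_sqrt, ← conjTranspose_eq_transpose_of_trivial, hA.1.eq,
    CFC.sqrt_mul_self A hA.nonneg]

section Trace

variable {m n : Type*} [Fintype m] [Fintype n]

lemma trace_transpose_mul_mul_nonneg {Λ : Matrix m m ℝ} (hΛ : Λ.PosSemidef)
    (X : Matrix m n ℝ) : 0 ≤ (Xᵀ * Λ * X).trace := by
  simpa using (hΛ.conjTranspose_mul_mul_same X).trace_nonneg

lemma trace_transpose_mul_mul_sq_le {Λ : Matrix m m ℝ} (hΛ : Λ.PosSemidef)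
    (X Y : Matrix m n ℝ) :
    (Xᵀ * Λ * Y).trace ^ 2 ≤ (Xᵀ * Λ * X).trace * (Yᵀ * Λ * Y).trace := by
  have hsymm : (Yᵀ * Λ * X).trace = (Xᵀ * Λ * Y).trace := by
    rw [← trace_transpose, transpose_mul, transpose_mul, transpose_transpose,
      ← conjTranspose_eq_transpose_of_trivial Λ, hΛ.1.eq, Matrix.mul_assoc]
  have hdisc := discrim_le_zero (a := (Yᵀ * Λ * Y).trace) (b := 2 * (Xᵀ * Λ * Y).trace)
    (c := (Xᵀ * Λ * X).trace) fun t => by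
      have := trace_transpose_mul_mul_nonneg hΛ (X + t • Y)
      simp only [transpose_add, transpose_smul, Matrix.add_mul, Matrix.mul_add, Matrix.smul_mul,
        Matrix.mul_smul, trace_add, trace_smul, hsymm, smul_eq_mul] at this
      linarith
  rw [discrim] at hdisc
  linarith

lemma trace_transpose_mul_mul_le_trace_s9 [DecidableEq m] {Λ : Matrix m m ℝ} (hΛ : Λ.PosSemidef)
    {W : Matrix m n ℝ} (hW : W * Wᵀ * W = W) : (Wᵀ * Λ * W).trace ≤ Λ.trace := by
  set P := W * Wᵀ with hP
  have hPP : P * P = P := by rw [hP, ← Matrix.mul_assoc, hW]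
  have hQ : (1 - P) * (1 - P)ᵀ = 1 - P := by
    rw [transpose_sub, transpose_one, hP, transpose_mul, transpose_transpose, ← hP]
    simp only [sub_mul, mul_sub, one_mul, mul_one, hPP, sub_self, sub_zero]
  have hnonneg := trace_transpose_mul_mul_nonneg hΛ (1 - P)
  rw [trace_mul_cycle, hQ, Matrix.sub_mul, Matrix.one_mul, trace_sub] at hnonneg
  rw [trace_mul_cycle]
  linarith

lemma exists_trace_transpose_mul_eq_trace_sqrt [DecidableEq n] (G : Matrix m n ℝ) :
    ∃ W : Matrix m n ℝ, W * Wᵀ * W = W ∧ (Wᵀ * G).trace = (CFC.sqrt (Gᵀ * G)).trace := by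
  set S := CFC.sqrt (Gᵀ * G)
  -- The spectrum of a matrix is finite, so `cfc` is multiplicative even for the discontinuous `x⁻¹`.
  have hcont (f : ℝ → ℝ) : ContinuousOn f (spectrum ℝ S) := S.finite_real_spectrum.continuousOn f
  set T := cfc (·⁻¹ : ℝ → ℝ) S
  have hT : Tᵀ = T := by
    rw [← conjTranspose_eq_transpose_of_trivial]; exact (cfc_predicate _ S : IsSelfAdjoint T)
  have hSS : S * S = Gᵀ * G :=
    CFC.sqrt_mul_sqrt_self _ (posSemidef_conjTranspose_mul_self G).nonneg
  have hTSS : T * S * S = S := by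
    have h := cfc_mul (fun x : ℝ => x⁻¹ * x) (fun x => x) S (hcont _) (hcont _)
    rw [cfc_mul (·⁻¹) (fun x => x) S (hcont _) (hcont _), cfc_id' ℝ S] at h
    simpa only [inv_mul_mul_self, cfc_id' ℝ S] using h.symm
  have hTST : T * S * T = T := by
    have h := cfc_mul (fun x : ℝ => x⁻¹ * x) (·⁻¹) S (hcont _) (hcont _)
    rw [cfc_mul (·⁻¹) (fun x => x) S (hcont _) (hcont _), cfc_id' ℝ S] at h
    have hf : (fun x : ℝ => x⁻¹ * x * x⁻¹) = (·⁻¹) :=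
      funext fun x => by simpa only [inv_inv] using mul_inv_mul_cancel x⁻¹
    rwa [hf, eq_comm] at h
  refine ⟨G * T, ?_, ?_⟩
  · calc G * T * (G * T)ᵀ * (G * T) = G * (T * (T * S * S) * T) := by
          simp only [transpose_mul, hT, hSS, Matrix.mul_assoc]
      _ = G * T := by rw [hTSS, hTST]
  · rw [transpose_mul, hT, Matrix.mul_assoc, ← hSS, ← Matrix.mul_assoc, hTSS]

end Trace

/-- for a symmetric positive definite `Λ ∈ ℝ^{m×m}` and any `G ∈ ℝ^{m×n}`,
`‖G‖_* ≤ sqrt(‖Λ‖_* · tr(Gᵀ Λ⁻¹ G))` where `‖Λ‖_* = tr(Λ)`. -/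
theorem stmt9 (m n : ℕ) (Λ : Matrix (Fin m) (Fin m) ℝ) (hΛ : Λ.PosDef)
    (G : Matrix (Fin m) (Fin n) ℝ) :
    nuclearNorm G ≤ Real.sqrt (nuclearNorm Λ * (Gᵀ * Λ⁻¹ * G).trace) := by
  obtain ⟨W, hW, htrace⟩ := exists_trace_transpose_mul_eq_trace_sqrt G
  have hdet : IsUnit Λ.det := hΛ.det_pos.ne'.isUnit
  have hΛinvG : (Λ⁻¹ * G)ᵀ * Λ * (Λ⁻¹ * G) = Gᵀ * Λ⁻¹ * G := by
    rw [transpose_mul, ← conjTranspose_eq_transpose_of_trivial Λ⁻¹, hΛ.inv.1.eq, Matrix.mul_assoc,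
      Matrix.mul_assoc, Λ.mul_nonsing_inv_cancel_left G hdet, ← Matrix.mul_assoc]
  rw [nuclearNorm_eq_trace_sqrt, ← htrace, nuclearNorm_eq_trace hΛ.posSemidef]
  calc (Wᵀ * G).trace = (Wᵀ * Λ * (Λ⁻¹ * G)).trace := by
        rw [Matrix.mul_assoc, Λ.mul_nonsing_inv_cancel_left G hdet]
    _ ≤ √((Wᵀ * Λ * W).trace * (Gᵀ * Λ⁻¹ * G).trace) := by
        rw [← hΛinvG]
        exact (le_abs_self _).trans
          (Real.abs_le_sqrt (trace_transpose_mul_mul_sq_le hΛ.posSemidef W (Λ⁻¹ * G)))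
    _ ≤ √(Λ.trace * (Gᵀ * Λ⁻¹ * G).trace) := by
        gcongr
        · exact trace_transpose_mul_mul_nonneg hΛ.inv.posSemidef G
        · exact trace_transpose_mul_mul_le_trace_s9 hΛ.posSemidef hW
end
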